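/- arXiv:1701.02978 — 6 statements merged into one kernel-verified Lean document; each statement's English description precedes it below -/
import Mathlib

section
/- For all real u > 0 and integers n ≥ 2, one has (n/(n-1))·(e^{2u} − 1) > (1 + 2u/(n-1))^n − 1. -/
open Real MeasureTheory


theorem stmt0 (u : ℝ) (hu : 0 < u) (n : ℕ) (hn : 2 ≤ n) :
    ((n : ℝ) / ((n : ℝ) - 1)) * (Real.exp (2 * u) - 1) > (1 + 2 * u / ((n : ℝ) - 1)) ^ n - 1 := by
  set c : ℝ := (n : ℝ) - 1 with hc
  have hc0 : (0:ℝ) < c := by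
    have : (2:ℝ) ≤ (n:ℝ) := by exact_mod_cast hn
    simp [hc]; linarith
  set f : ℝ → ℝ := fun x => ((n : ℝ) / c) * (Real.exp (2 * x) - 1) - ((1 + 2 * x / c) ^ n - 1)
    with hf
  have hderiv : ∀ x : ℝ, HasDerivAt f
      (((n : ℝ) / c) * (Real.exp (2 * x) * 2) - (n : ℝ) * (1 + 2 * x / c) ^ (n - 1) * (2 / c)) x := by
    intro x
    have h1 : HasDerivAt (fun x : ℝ => Real.exp (2 * x)) (Real.exp (2 * x) * 2) x := by
      have := ((hasDerivAt_id x).const_mul 2).exp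
      simpa using this
    have h2 : HasDerivAt (fun x : ℝ => 1 + 2 * x / c) (2 / c) x := by
      have := ((hasDerivAt_id x).const_mul 2).div_const c
      simpa [mul_comm] using this.const_add 1
    have h3 := h2.pow n
    have h4 := ((h1.sub_const 1).const_mul ((n:ℝ)/c)).sub (h3.sub_const 1)
    exact h4
  have key : ∀ x : ℝ, 0 < x → (1 + 2 * x / c) ^ (n - 1) < Real.exp (2 * x) := by
    intro x hx
    have ha : 0 < 2 * x / c := by positivity
    have h1 : 1 + 2 * x / c < Real.exp (2 * x / c) := by
      have := Real.add_one_lt_exp (ne_of_gt ha)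
      linarith
    have hb : (0:ℝ) ≤ 1 + 2 * x / c := by linarith
    have h2 : (1 + 2 * x / c) ^ (n - 1) < (Real.exp (2 * x / c)) ^ (n - 1) := by
      apply pow_lt_pow_left₀ h1 hb
      omega
    calc (1 + 2 * x / c) ^ (n - 1) < (Real.exp (2 * x / c)) ^ (n - 1) := h2
      _ = Real.exp ((n - 1 : ℕ) * (2 * x / c)) := by rw [← Real.exp_nat_mul]
      _ = Real.exp (2 * x) := by
          congr 1
          have : ((n - 1 : ℕ) : ℝ) = c := by
            rw [hc]; push_cast [Nat.cast_sub (by omega : 1 ≤ n)]; ring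
          rw [this]; field_simp
  have hmono : StrictMonoOn f (Set.Ici 0) := by
    apply strictMonoOn_of_deriv_pos (convex_Ici 0)
    · exact Continuous.continuousOn (by fun_prop)
    · intro x hx
      rw [interior_Ici] at hx
      rw [(hderiv x).deriv]
      have hkey := key x hx
      have hn0 : (0:ℝ) < (n:ℝ) := by positivity
      have : (n : ℝ) * (1 + 2 * x / c) ^ (n - 1) * (2 / c) < (n:ℝ) * Real.exp (2*x) * (2/c) := by
        apply mul_lt_mul_of_pos_right _ (by positivity)
        exact mul_lt_mul_of_pos_left hkey hn0
      have heq : ((n : ℝ) / c) * (Real.exp (2 * x) * 2) = (n:ℝ) * Real.exp (2*x) * (2/c) := by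
        field_simp
      linarith [heq]
  have h0 : f 0 = 0 := by simp [hf]
  have := hmono (Set.self_mem_Ici) (Set.mem_Ici.mpr hu.le) hu
  rw [h0] at this
  have : 0 < ((n : ℝ) / c) * (Real.exp (2 * u) - 1) - ((1 + 2 * u / c) ^ n - 1) := this
  linarith
end

section
/- For all x > 0 and real ν with 0 ≤ ν < 1/2, the modified Bessel function of the second kind satisfies K_ν(x) > √(π/2) · x^ν · Γ(x + 1/2 − ν) · e^{−x} / Γ(x + 1). -/
open Real MeasureTheory

private lemma quad_lt_exp' {u : ℝ} (hu : 0 < u) : 1 + u + u ^ 2 / 2 < Real.exp u := by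
  set F : ℝ → ℝ := fun v => Real.exp v - (1 + v + v ^ 2 / 2) with hF
  have hder : ∀ v : ℝ, HasDerivAt F (Real.exp v - (1 + v)) v := by
    intro v
    have h1 : HasDerivAt (fun w : ℝ => 1 + w + w ^ 2 / 2) (1 + v) v := by
      have := (((hasDerivAt_id v).const_add 1).add ((hasDerivAt_pow 2 v).div_const 2))
      exact this.congr_deriv (by norm_num)
    exact (Real.hasDerivAt_exp v).sub h1
  have hmono : StrictMonoOn F (Set.Ici 0) := by
    apply strictMonoOn_of_deriv_pos (convex_Ici 0)
    · exact (Real.continuous_exp.sub (by continuity)).continuousOn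
    · intro v hv
      rw [interior_Ici] at hv
      rw [(hder v).deriv]
      have := Real.add_one_lt_exp (ne_of_gt (hv : (0:ℝ) < v))
      linarith
  have h0 : F 0 = 0 := by simp [hF]
  have := hmono (Set.self_mem_Ici) (Set.mem_Ici.2 hu.le) hu
  rw [h0] at this
  simp only [hF] at this
  linarith

private lemma real_beta {a b : ℝ} (ha : 0 < a) (hb : 0 < b) :
    ∫ s in Set.Ioo (0:ℝ) 1, s ^ (a - 1) * (1 - s) ^ (b - 1) =
      Real.Gamma a * Real.Gamma b / Real.Gamma (a + b) := by
  have h := Complex.Gamma_mul_Gamma_eq_betaIntegral (s := (a:ℂ)) (t := (b:ℂ))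
    (by simpa using ha) (by simpa using hb)
  have hβ : Complex.betaIntegral (a:ℂ) (b:ℂ) =
      ((∫ s in Set.Ioo (0:ℝ) 1, s ^ (a - 1) * (1 - s) ^ (b - 1) : ℝ) : ℂ) := by
    rw [Complex.betaIntegral, intervalIntegral.integral_of_le zero_le_one,
      MeasureTheory.integral_Ioc_eq_integral_Ioo]
    have : ((∫ s in Set.Ioo (0:ℝ) 1, s ^ (a - 1) * (1 - s) ^ (b - 1) : ℝ) : ℂ) =
        ∫ s in Set.Ioo (0:ℝ) 1, ((s ^ (a - 1) * (1 - s) ^ (b - 1) : ℝ) : ℂ) :=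
      (integral_ofReal (𝕜 := ℂ)).symm
    rw [this]
    apply MeasureTheory.setIntegral_congr_fun measurableSet_Ioo
    intro s hs
    have h1 : ((s:ℝ):ℂ) ^ ((a:ℂ) - 1) = ((s ^ (a-1) : ℝ) : ℂ) := by
      rw [Complex.ofReal_cpow hs.1.le]; push_cast; ring_nf
    have h2 : ((1:ℂ) - (s:ℝ)) ^ ((b:ℂ) - 1) = (((1 - s) ^ (b-1) : ℝ) : ℂ) := by
      rw [show ((1:ℂ) - (s:ℝ)) = (((1 - s : ℝ)):ℂ) by push_cast; ring,
        Complex.ofReal_cpow (by linarith [hs.2] : (0:ℝ) ≤ 1 - s)]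
      push_cast; ring_nf
    show (s:ℂ) ^ ((a:ℂ) - 1) * (1 - (s:ℝ):ℂ) ^ ((b:ℂ) - 1) = _
    rw [h1, h2]; push_cast; ring
  rw [hβ, ← Complex.ofReal_add, Complex.Gamma_ofReal, Complex.Gamma_ofReal,
    Complex.Gamma_ofReal] at h
  have h' : Real.Gamma a * Real.Gamma b =
      Real.Gamma (a + b) * ∫ s in Set.Ioo (0:ℝ) 1, s ^ (a - 1) * (1 - s) ^ (b - 1) := by
    exact_mod_cast h
  have hG : Real.Gamma (a + b) ≠ 0 := (Real.Gamma_pos_of_pos (by linarith)).ne'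
  field_simp [h']
  rw [h']; ring

private lemma cov_log (x ν : ℝ) :
    ∫ t in Set.Ioi (1:ℝ), Real.exp (-x * (t - 1)) * (Real.exp (t - 1) - 1) ^ (ν - 1/2) =
      ∫ s in Set.Ioo (0:ℝ) 1, s ^ (x + 1/2 - ν - 1) * (1 - s) ^ (ν + 1/2 - 1) := by
  have himg : (fun s : ℝ => 1 - Real.log s) '' Set.Ioo 0 1 = Set.Ioi 1 := by
    ext t
    constructor
    · rintro ⟨s, hs, rfl⟩
      have := Real.log_neg hs.1 hs.2
      simp only [Set.mem_Ioi]; linarith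
    · intro ht
      refine ⟨Real.exp (1 - t), ⟨Real.exp_pos _, ?_⟩, ?_⟩
      · rw [Real.exp_lt_one_iff]; simp only [Set.mem_Ioi] at ht; linarith
      · show 1 - Real.log (Real.exp (1 - t)) = t
        rw [Real.log_exp]; ring
  have hderiv : ∀ s ∈ Set.Ioo (0:ℝ) 1,
      HasDerivWithinAt (fun s : ℝ => 1 - Real.log s) (-s⁻¹) (Set.Ioo 0 1) s := by
    intro s hs
    exact ((Real.hasDerivAt_log hs.1.ne').const_sub 1).hasDerivWithinAt
  have hinj : Set.InjOn (fun s : ℝ => 1 - Real.log s) (Set.Ioo 0 1) := by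
    intro p hp q hq hpq
    simp only [sub_right_inj] at hpq
    exact Real.log_injOn_pos (Set.mem_Ioi.2 hp.1) (Set.mem_Ioi.2 hq.1) hpq
  rw [← himg, integral_image_eq_integral_abs_deriv_smul measurableSet_Ioo hderiv hinj]
  apply MeasureTheory.setIntegral_congr_fun measurableSet_Ioo
  intro s hs
  have hs0 : (0:ℝ) < s := hs.1
  have hs1 : s < 1 := hs.2
  have h1 : Real.exp (-x * (1 - Real.log s - 1)) = s ^ x := by
    rw [Real.rpow_def_of_pos hs0]; congr 1; ring
  have h2 : Real.exp (1 - Real.log s - 1) - 1 = (1 - s) / s := by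
    rw [show (1 : ℝ) - Real.log s - 1 = -Real.log s by ring, Real.exp_neg, Real.exp_log hs0]
    field_simp
  have h3 : ((1 - s) / s) ^ (ν - 1/2) = (1 - s) ^ (ν - 1/2) / s ^ (ν - 1/2) :=
    Real.div_rpow (by linarith : (0:ℝ) ≤ 1 - s) hs0.le _
  show |(-s⁻¹)| * (Real.exp (-x * (1 - Real.log s - 1)) *
      (Real.exp (1 - Real.log s - 1) - 1) ^ (ν - 1/2)) = _
  rw [abs_neg, abs_inv, abs_of_pos hs0, h1, h2, h3]
  rw [show s⁻¹ = s ^ (-1 : ℝ) by rw [Real.rpow_neg_one],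
    div_eq_mul_inv, ← Real.rpow_neg hs0.le]
  show s ^ (-1:ℝ) * (s ^ x * ((1 - s) ^ (ν - 1/2) * s ^ (-(ν - 1/2)))) =
      s ^ (x + 1/2 - ν - 1) * (1 - s) ^ (ν + 1/2 - 1)
  rw [show s ^ (-1:ℝ) * (s ^ x * ((1 - s) ^ (ν - 1/2) * s ^ (-(ν - 1/2)))) =
      (s ^ (-1:ℝ) * s ^ x * s ^ (-(ν - 1/2))) * (1 - s) ^ (ν - 1/2) by ring,
    ← Real.rpow_add hs0, ← Real.rpow_add hs0,
    show -1 + x + -(ν - 1/2) = x + 1/2 - ν - 1 by ring,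
    show ν - 1/2 = ν + 1/2 - 1 by ring]

private lemma f_integrable {x ν : ℝ} (hx : 0 < x) (hν0 : 0 ≤ ν) (hν : ν < 1/2) :
    IntegrableOn (fun t : ℝ => Real.exp (-x * t) * (t ^ 2 - 1) ^ (ν - 1/2))
      (Set.Ioi (1:ℝ)) := by
  set f : ℝ → ℝ := fun t => Real.exp (-x * t) * (t ^ 2 - 1) ^ (ν - 1/2) with hf
  have hcont : ContinuousOn f (Set.Ioi 1) := by
    apply ContinuousOn.mul
    · exact (Real.continuous_exp.comp (continuous_const.mul continuous_id)).continuousOn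
    · apply ContinuousOn.rpow_const
      · exact (continuous_pow 2).continuousOn.sub continuousOn_const
      · intro t ht
        left
        have : (1:ℝ) < t := ht
        nlinarith
  have key : ∀ t ∈ Set.Ioi (1:ℝ), 0 ≤ f t ∧
      f t ≤ (t - 1) ^ (ν - 1/2) ∧ (2 ≤ t → f t ≤ Real.exp (-x * t)) := by
    intro t ht
    have ht1 : (1:ℝ) < t := ht
    have hsq : (0:ℝ) < t ^ 2 - 1 := by nlinarith
    refine ⟨mul_nonneg (Real.exp_pos _).le (Real.rpow_nonneg (by linarith) _), ?_, ?_⟩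
    · have hfac : t ^ 2 - 1 = (t - 1) * (t + 1) := by ring
      have hA : (0:ℝ) ≤ t - 1 := by linarith
      have hB : (1:ℝ) ≤ t + 1 := by linarith
      have hrw : (t ^ 2 - 1) ^ (ν - 1/2) = (t - 1) ^ (ν - 1/2) * (t + 1) ^ (ν - 1/2) := by
        rw [hfac, Real.mul_rpow hA (by linarith)]
      have he : Real.exp (-x * t) ≤ 1 := by
        rw [Real.exp_le_one_iff]; nlinarith
      have hBle : (t + 1) ^ (ν - 1/2) ≤ 1 :=
        Real.rpow_le_one_of_one_le_of_nonpos hB (by linarith)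
      have hAnn : (0:ℝ) ≤ (t - 1) ^ (ν - 1/2) := Real.rpow_nonneg hA _
      have hBnn : (0:ℝ) ≤ (t + 1) ^ (ν - 1/2) := Real.rpow_nonneg (by linarith) _
      calc f t = Real.exp (-x * t) * ((t - 1) ^ (ν - 1/2) * (t + 1) ^ (ν - 1/2)) := by
                rw [hf]; simp only []; rw [hrw]
        _ ≤ 1 * ((t - 1) ^ (ν - 1/2) * 1) := by
              apply mul_le_mul he (mul_le_mul le_rfl hBle hBnn hAnn)
                (mul_nonneg hAnn hBnn) zero_le_one
        _ = (t - 1) ^ (ν - 1/2) := by ring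
    · intro ht2
      have hge : (1:ℝ) ≤ t ^ 2 - 1 := by nlinarith
      have : (t ^ 2 - 1) ^ (ν - 1/2) ≤ 1 :=
        Real.rpow_le_one_of_one_le_of_nonpos hge (by linarith)
      calc f t ≤ Real.exp (-x * t) * 1 :=
            mul_le_mul le_rfl this (Real.rpow_nonneg (by linarith) _) (Real.exp_pos _).le
        _ = Real.exp (-x * t) := by ring
  have h12 : IntegrableOn f (Set.Ioc 1 2) := by
    have hbase : IntervalIntegrable (fun u : ℝ => u ^ (ν - 1/2)) volume 0 1 :=
      intervalIntegral.intervalIntegrable_rpow' (by linarith)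
    have hshift := hbase.comp_sub_right 1
    norm_num at hshift
    have hint : IntegrableOn (fun t : ℝ => (t - 1) ^ (ν - 1/2)) (Set.Ioc 1 2) :=
      (intervalIntegrable_iff_integrableOn_Ioc_of_le (by norm_num)).1 hshift
    apply hint.mono' ((hcont.mono Set.Ioc_subset_Ioi_self).aestronglyMeasurable measurableSet_Ioc)
    filter_upwards [ae_restrict_mem measurableSet_Ioc] with t ht
    have := key t (Set.Ioc_subset_Ioi_self ht)
    rw [Real.norm_eq_abs, abs_of_nonneg this.1]
    exact this.2.1
  have h2i : IntegrableOn f (Set.Ioi 2) := by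
    apply (exp_neg_integrableOn_Ioi 2 hx).mono'
      ((hcont.mono (Set.Ioi_subset_Ioi (by norm_num))).aestronglyMeasurable measurableSet_Ioi)
    filter_upwards [ae_restrict_mem measurableSet_Ioi] with t ht
    have ht2 : (2:ℝ) < t := ht
    have := key t (by simp only [Set.mem_Ioi]; linarith)
    rw [Real.norm_eq_abs, abs_of_nonneg this.1]
    exact this.2.2 ht2.le
  have : Set.Ioc (1:ℝ) 2 ∪ Set.Ioi 2 = Set.Ioi 1 := Set.Ioc_union_Ioi_eq_Ioi (by norm_num)
  rw [← this]
  exact h12.union h2i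

noncomputable def besselK (ν x : ℝ) : ℝ :=
  (Real.sqrt Real.pi * (x / 2) ^ ν / Real.Gamma (ν + 1 / 2)) *
    ∫ t in Set.Ioi (1 : ℝ), Real.exp (-x * t) * (t ^ 2 - 1) ^ (ν - 1 / 2)

theorem stmt3 (x ν : ℝ) (hx : 0 < x) (hν0 : 0 ≤ ν) (hν : ν < 1 / 2) :
    besselK ν x >
      Real.sqrt (Real.pi / 2) * x ^ ν * Real.Gamma (x + 1 / 2 - ν) * Real.exp (-x) /
        Real.Gamma (x + 1) := by
  set f : ℝ → ℝ := fun t => Real.exp (-x * t) * (t ^ 2 - 1) ^ (ν - 1/2) with hfdef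
  set g : ℝ → ℝ := fun t => Real.exp (-x * t) * (2 * (Real.exp (t - 1) - 1)) ^ (ν - 1/2)
    with hgdef
  have hexp_neg : ν - 1/2 < 0 := by linarith
  -- pointwise comparison
  have hpt : ∀ t ∈ Set.Ioi (1:ℝ), 0 ≤ g t ∧ g t < f t := by
    intro t ht
    have ht1 : (1:ℝ) < t := ht
    have hu : (0:ℝ) < t - 1 := by linarith
    have hsq : (0:ℝ) < t ^ 2 - 1 := by nlinarith
    have hquad := quad_lt_exp' hu
    have hlt : t ^ 2 - 1 < 2 * (Real.exp (t - 1) - 1) := by nlinarith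
    have h2pos : (0:ℝ) < 2 * (Real.exp (t - 1) - 1) := by linarith
    constructor
    · exact mul_nonneg (Real.exp_pos _).le (Real.rpow_nonneg h2pos.le _)
    · have := Real.rpow_lt_rpow_of_neg hsq hlt hexp_neg
      exact mul_lt_mul_of_pos_left this (Real.exp_pos _)
  have hfint : IntegrableOn f (Set.Ioi (1:ℝ)) := f_integrable hx hν0 hν
  have hgcont : ContinuousOn g (Set.Ioi 1) := by
    apply ContinuousOn.mul
    · exact (Real.continuous_exp.comp (continuous_const.mul continuous_id)).continuousOn
    · apply ContinuousOn.rpow_const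
      · exact (continuous_const.mul ((Real.continuous_exp.comp (continuous_id.sub
          continuous_const)).sub continuous_const)).continuousOn
      · intro t ht
        left
        have ht1 : (1:ℝ) < t := ht
        have : (1:ℝ) < Real.exp (t - 1) := by
          have := Real.add_one_lt_exp (ne_of_gt (show (0:ℝ) < t - 1 by linarith))
          linarith
        show 2 * (Real.exp (t - 1) - 1) ≠ 0
        have : (0:ℝ) < 2 * (Real.exp (t - 1) - 1) := by linarith
        exact ne_of_gt this
  have hgint : IntegrableOn g (Set.Ioi (1:ℝ)) := by
    apply hfint.mono' (hgcont.aestronglyMeasurable measurableSet_Ioi)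
    filter_upwards [ae_restrict_mem measurableSet_Ioi] with t ht
    have := hpt t ht
    rw [Real.norm_eq_abs, abs_of_nonneg this.1]
    exact this.2.le
  -- strict integral inequality
  have hlt : (∫ t in Set.Ioi (1:ℝ), g t) < ∫ t in Set.Ioi (1:ℝ), f t := by
    have hsub : IntegrableOn (fun t => f t - g t) (Set.Ioi (1:ℝ)) := hfint.sub hgint
    have hpos : 0 < ∫ t in Set.Ioi (1:ℝ), (f t - g t) := by
      rw [setIntegral_pos_iff_support_of_nonneg_ae ?_ hsub]
      · apply lt_of_lt_of_le _ (measure_mono (?_ : Set.Ioi (1:ℝ) ⊆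
          Function.support (fun t => f t - g t) ∩ Set.Ioi 1))
        · simp [Real.volume_Ioi]
        · intro t ht
          exact ⟨sub_ne_zero.2 (hpt t ht).2.ne', ht⟩
      · filter_upwards [ae_restrict_mem measurableSet_Ioi] with t ht
        exact sub_nonneg.2 (hpt t ht).2.le
    have := MeasureTheory.integral_sub hfint hgint
    rw [this] at hpos
    linarith
  -- value of ∫ g
  have hb : (0:ℝ) < ν + 1/2 := by linarith
  have ha : (0:ℝ) < x + 1/2 - ν := by linarith
  have hgval : (∫ t in Set.Ioi (1:ℝ), g t) =
      (2:ℝ) ^ (ν - 1/2) * Real.exp (-x) *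
        (Real.Gamma (x + 1/2 - ν) * Real.Gamma (ν + 1/2) / Real.Gamma (x + 1)) := by
    have hcongr : ∀ t ∈ Set.Ioi (1:ℝ), g t = ((2:ℝ) ^ (ν - 1/2) * Real.exp (-x)) *
        (Real.exp (-x * (t - 1)) * (Real.exp (t - 1) - 1) ^ (ν - 1/2)) := by
      intro t ht
      have ht1 : (1:ℝ) < t := ht
      have hpos : (0:ℝ) ≤ Real.exp (t - 1) - 1 := by
        have : (1:ℝ) ≤ Real.exp (t - 1) := Real.one_le_exp (by linarith)
        linarith
      have h1 : ((2:ℝ) * (Real.exp (t - 1) - 1)) ^ (ν - 1/2) =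
          (2:ℝ) ^ (ν - 1/2) * (Real.exp (t - 1) - 1) ^ (ν - 1/2) :=
        Real.mul_rpow (by norm_num) hpos
      have h2 : Real.exp (-x * t) = Real.exp (-x) * Real.exp (-x * (t - 1)) := by
        rw [← Real.exp_add]; congr 1; ring
      show Real.exp (-x * t) * ((2:ℝ) * (Real.exp (t - 1) - 1)) ^ (ν - 1/2) = _
      rw [h1, h2]; ring
    rw [MeasureTheory.setIntegral_congr_fun measurableSet_Ioi hcongr,
      MeasureTheory.integral_const_mul, cov_log x ν,
      show x + 1/2 - ν - 1 = (x + 1/2 - ν) - 1 by ring,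
      show ν + 1/2 - 1 = (ν + 1/2) - 1 by ring,
      real_beta ha hb, show x + 1/2 - ν + (ν + 1/2) = x + 1 by ring]
  -- assemble
  have hΓb : (0:ℝ) < Real.Gamma (ν + 1/2) := Real.Gamma_pos_of_pos hb
  have hC : (0:ℝ) < Real.sqrt Real.pi * (x / 2) ^ ν / Real.Gamma (ν + 1/2) := by
    apply div_pos (mul_pos (Real.sqrt_pos.2 Real.pi_pos) (Real.rpow_pos_of_pos (by linarith) _))
      hΓb
  have hkey : besselK ν x > (Real.sqrt Real.pi * (x / 2) ^ ν / Real.Gamma (ν + 1/2)) *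
      ∫ t in Set.Ioi (1:ℝ), g t := by
    rw [besselK]
    exact mul_lt_mul_of_pos_left hlt hC
  have hconst : (Real.sqrt Real.pi * (x / 2) ^ ν / Real.Gamma (ν + 1/2)) *
      ((2:ℝ) ^ (ν - 1/2) * Real.exp (-x) *
        (Real.Gamma (x + 1/2 - ν) * Real.Gamma (ν + 1/2) / Real.Gamma (x + 1))) =
      Real.sqrt (Real.pi / 2) * x ^ ν * Real.Gamma (x + 1/2 - ν) * Real.exp (-x) /
        Real.Gamma (x + 1) := by
    have hxd : (x / 2) ^ ν = x ^ ν / (2:ℝ) ^ ν := Real.div_rpow hx.le (by norm_num) _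
    have h2s : (2:ℝ) ^ (ν - 1/2) = (2:ℝ) ^ ν / Real.sqrt 2 := by
      rw [show ν - 1/2 = ν + (-(1/2)) by ring, Real.rpow_add (by norm_num : (0:ℝ) < 2),
        Real.rpow_neg (by norm_num : (0:ℝ) ≤ 2), Real.sqrt_eq_rpow]
      ring
    have hsd : Real.sqrt (Real.pi / 2) = Real.sqrt Real.pi / Real.sqrt 2 :=
      Real.sqrt_div Real.pi_pos.le 2
    have h2ν : (0:ℝ) < (2:ℝ) ^ ν := Real.rpow_pos_of_pos (by norm_num) _
    have hs2 : (0:ℝ) < Real.sqrt 2 := Real.sqrt_pos.2 (by norm_num)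
    have hΓx : (0:ℝ) < Real.Gamma (x + 1) := Real.Gamma_pos_of_pos (by linarith)
    rw [hxd, h2s, hsd]
    field_simp
  rw [hgval] at hkey
  rw [hconst] at hkey
  exact hkey
end

section
/- For all real ν > 1/2 and all x > ν − 1/2, the modified Bessel function of the second kind satisfies K_ν(x) < √(π/2) · x^ν · Γ(x + 1/2 − ν) · e^{−x} / Γ(x + 1). -/
open Real MeasureTheory

lemma cpow_eq_aux {a b : ℝ} (u : ℝ) (hu : u ∈ Set.Ioc (0:ℝ) 1) :
    ((u:ℂ) ^ ((a:ℂ)-1) * ((1:ℂ)-u) ^ ((b:ℂ)-1)) = ((u ^ (a-1) * (1-u) ^ (b-1) : ℝ) : ℂ) := by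
  have h1 : ((a:ℂ)-1) = ((a-1 : ℝ) : ℂ) := by push_cast; ring
  have h2 : ((b:ℂ)-1) = ((b-1 : ℝ) : ℂ) := by push_cast; ring
  have h3 : ((1:ℂ) - u) = ((1 - u : ℝ) : ℂ) := by push_cast; ring
  rw [h1, h2, h3, ← Complex.ofReal_cpow hu.1.le,
    ← Complex.ofReal_cpow (by linarith [hu.2] : (0:ℝ) ≤ 1 - u)]
  push_cast; ring

lemma real_beta_aux {a b : ℝ} (ha : 0 < a) (hb : 0 < b) :
    Real.Gamma a * Real.Gamma b =
      Real.Gamma (a + b) * ∫ u in Set.Ioo (0:ℝ) 1, u ^ (a-1) * (1-u) ^ (b-1) := by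
  have h := Complex.Gamma_mul_Gamma_eq_betaIntegral
      (s := (a:ℂ)) (t := (b:ℂ)) (by simpa using ha) (by simpa using hb)
  have hbeta : Complex.betaIntegral a b =
      ((∫ u in Set.Ioo (0:ℝ) 1, u ^ (a-1) * (1-u) ^ (b-1) : ℝ) : ℂ) := by
    rw [Complex.betaIntegral, intervalIntegral.integral_of_le zero_le_one,
      MeasureTheory.setIntegral_congr_fun measurableSet_Ioc (fun u hu => cpow_eq_aux u hu),
      MeasureTheory.integral_Ioc_eq_integral_Ioo]
    exact integral_ofReal
  rw [hbeta, ← Complex.ofReal_add, Complex.Gamma_ofReal, Complex.Gamma_ofReal,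
    Complex.Gamma_ofReal] at h
  exact_mod_cast h

lemma real_beta_integrableOn_aux {a b : ℝ} (ha : 0 < a) (hb : 0 < b) :
    IntegrableOn (fun u : ℝ => u ^ (a-1) * (1-u) ^ (b-1)) (Set.Ioo 0 1) := by
  have h := Complex.betaIntegral_convergent (u := (a:ℂ)) (v := (b:ℂ)) (by simpa using ha)
    (by simpa using hb)
  rw [intervalIntegrable_iff_integrableOn_Ioc_of_le zero_le_one] at h
  have h2 := (h.mono_set Set.Ioo_subset_Ioc_self).re
  refine IntegrableOn.congr_fun h2 (fun u hu => ?_) measurableSet_Ioo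
  have := cpow_eq_aux (a := a) (b := b) u (Set.Ioo_subset_Ioc_self hu)
  simp [this]

theorem stmt5 (ν x : ℝ) (hν : 1 / 2 < ν) (hx : ν - 1 / 2 < x) :
    besselK ν x <
      Real.sqrt (Real.pi / 2) * x ^ ν * Real.Gamma (x + 1 / 2 - ν) * Real.exp (-x) /
        Real.Gamma (x + 1) := by
  have hx0 : 0 < x := by linarith
  set a : ℝ := x + 1/2 - ν with ha_def
  set b : ℝ := ν + 1/2 with hb_def
  have ha : 0 < a := by simp only [ha_def]; linarith
  have hb : 0 < b := by simp only [hb_def]; linarith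
  have hab : a + b = x + 1 := by simp only [ha_def, hb_def]; ring
  -- substitution t ↦ exp (1 - t)
  have himg : (fun t => Real.exp (1 - t)) '' Set.Ioi 1 = Set.Ioo (0:ℝ) 1 := by
    ext u
    simp only [Set.mem_image, Set.mem_Ioi, Set.mem_Ioo]
    constructor
    · rintro ⟨t, ht, rfl⟩
      exact ⟨Real.exp_pos _, Real.exp_lt_one_iff.2 (by linarith)⟩
    · rintro ⟨hu0, hu1⟩
      refine ⟨1 - Real.log u, by nlinarith [Real.log_neg hu0 hu1], by simp [Real.exp_log hu0]⟩
  have hderiv : ∀ t ∈ Set.Ioi (1:ℝ),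
      HasDerivWithinAt (fun t => Real.exp (1 - t)) (-Real.exp (1 - t)) (Set.Ioi 1) t := by
    intro t ht
    have h1 : HasDerivAt (fun t : ℝ => 1 - t) (-1) t := by
      simpa using (hasDerivAt_id t).const_sub 1
    simpa using h1.exp.hasDerivWithinAt
  have hinj : Set.InjOn (fun t => Real.exp (1 - t)) (Set.Ioi 1) := by
    intro s _ t _ h
    have := Real.exp_injective h
    linarith
  have hchange := MeasureTheory.integral_image_eq_integral_abs_deriv_smul measurableSet_Ioi
    hderiv hinj (fun u => u ^ (a-1) * (1-u) ^ (b-1))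
  rw [himg] at hchange
  have hpt : ∀ t ∈ Set.Ioi (1:ℝ),
      |(-Real.exp (1-t))| • (Real.exp (1-t) ^ (a-1) * (1 - Real.exp (1-t)) ^ (b-1)) =
      Real.exp x * (Real.exp (-x*t) * (Real.exp (t-1) - 1) ^ (ν-1/2)) := by
    intro t ht
    simp only [Set.mem_Ioi] at ht
    have h1 : (0:ℝ) < Real.exp (t-1) - 1 := by
      rw [sub_pos]; exact Real.one_lt_exp_iff.2 (by linarith)
    have h2 : 1 - Real.exp (1-t) = Real.exp (1-t) * (Real.exp (t-1) - 1) := by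
      rw [mul_sub, mul_one, ← Real.exp_add]
      norm_num
    have hb1 : b - 1 = ν - 1/2 := by simp only [hb_def]; ring
    rw [smul_eq_mul, abs_neg, abs_of_pos (Real.exp_pos _), h2,
      Real.mul_rpow (Real.exp_pos _).le h1.le, ← Real.exp_mul, ← Real.exp_mul, hb1]
    have hE : Real.exp (1-t) * Real.exp ((1-t)*(a-1)) * Real.exp ((1-t)*(ν-1/2)) =
        Real.exp x * Real.exp (-x*t) := by
      rw [← Real.exp_add, ← Real.exp_add, ← Real.exp_add]
      congr 1
      linear_combination (1 - t) * ha_def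
    linear_combination (Real.exp (t-1) - 1) ^ (ν-1/2) * hE
  -- the comparison function h and its integral
  set h : ℝ → ℝ := fun t => Real.exp (-x*t) * (Real.exp (t-1) - 1) ^ (ν-1/2) with hh_def
  have hGx1 : 0 < Real.Gamma (x+1) := Real.Gamma_pos_of_pos (by linarith)
  have hGa : 0 < Real.Gamma a := Real.Gamma_pos_of_pos ha
  have hGb : 0 < Real.Gamma b := Real.Gamma_pos_of_pos hb
  -- ∫ over Ioo equals exp x * ∫ h over Ioi 1
  have hint_val : ∫ u in Set.Ioo (0:ℝ) 1, u ^ (a-1) * (1-u) ^ (b-1) =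
      Real.exp x * ∫ t in Set.Ioi (1:ℝ), h t := by
    rw [hchange, MeasureTheory.setIntegral_congr_fun measurableSet_Ioi hpt,
      MeasureTheory.integral_const_mul]
  have hJ : ∫ t in Set.Ioi (1:ℝ), h t =
      Real.exp (-x) * (Real.Gamma a * Real.Gamma b / Real.Gamma (x+1)) := by
    have hB := real_beta_aux ha hb
    rw [hab, hint_val] at hB
    have hEx : Real.exp (-x) * Real.exp x = 1 := by rw [← Real.exp_add]; simp
    have h3 : Real.exp (-x) * (Real.Gamma a * Real.Gamma b / Real.Gamma (x+1)) =
        Real.exp (-x) * (Real.exp x * ∫ t in Set.Ioi 1, h t) := by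
      rw [hB]; field_simp
    rw [h3, ← mul_assoc, hEx, one_mul]
  -- integrability of h on Ioi 1
  have hint_h : IntegrableOn h (Set.Ioi 1) := by
    have h0 := (MeasureTheory.integrableOn_image_iff_integrableOn_abs_deriv_smul
      measurableSet_Ioi hderiv hinj (fun u => u ^ (a-1) * (1-u) ^ (b-1))).mp
      (himg ▸ real_beta_integrableOn_aux ha hb)
    have h1 : IntegrableOn (fun t => Real.exp x * h t) (Set.Ioi 1) :=
      IntegrableOn.congr_fun h0 (fun t ht => hpt t ht) measurableSet_Ioi
    have h2 := h1.const_mul (Real.exp x)⁻¹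
    refine IntegrableOn.congr_fun h2 (fun t _ => ?_) measurableSet_Ioi
    field_simp
  -- pointwise strict inequality
  set f : ℝ → ℝ := fun t => Real.exp (-x*t) * (t^2 - 1) ^ (ν-1/2) with hf_def
  have hflt : ∀ t ∈ Set.Ioi (1:ℝ), f t < (2:ℝ)^(ν-1/2) * h t := by
    intro t ht
    simp only [Set.mem_Ioi] at ht
    have h1 : (0:ℝ) < Real.exp (t-1) - 1 := by
      rw [sub_pos]; exact Real.one_lt_exp_iff.2 (by linarith)
    have hbase : t^2 - 1 < 2 * (Real.exp (t-1) - 1) := by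
      have hsum := Real.sum_le_exp_of_nonneg (x := t-1) (by linarith) 4
      have hexp : 1 + (t-1) + (t-1)^2/2 + (t-1)^3/6 ≤ Real.exp (t-1) := by
        have heq : ∑ i ∈ Finset.range 4, (t-1) ^ i / (Nat.factorial i : ℝ) =
            1 + (t-1) + (t-1)^2/2 + (t-1)^3/6 := by
          simp [Finset.sum_range_succ, Nat.factorial]
        rw [heq] at hsum
        exact hsum
      nlinarith [pow_pos (show (0:ℝ) < t - 1 by linarith) 3]
    have hrpow : (t^2 - 1) ^ (ν-1/2) < (2 * (Real.exp (t-1) - 1)) ^ (ν-1/2) :=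
      Real.rpow_lt_rpow (by nlinarith) hbase (by linarith)
    have : (2 * (Real.exp (t-1) - 1)) ^ (ν-1/2) = (2:ℝ)^(ν-1/2) * (Real.exp (t-1) - 1)^(ν-1/2) :=
      Real.mul_rpow (by norm_num) h1.le
    simp only [hf_def, hh_def]
    calc Real.exp (-x*t) * (t^2 - 1) ^ (ν-1/2)
        < Real.exp (-x*t) * (2 * (Real.exp (t-1) - 1)) ^ (ν-1/2) := by
          exact mul_lt_mul_of_pos_left hrpow (Real.exp_pos _)
      _ = (2:ℝ)^(ν-1/2) * (Real.exp (-x*t) * (Real.exp (t-1) - 1)^(ν-1/2)) := by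
          rw [this]; ring
  -- integrability of f
  have hfcont : Continuous f := by
    apply Continuous.mul
    · exact (Real.continuous_exp.comp (continuous_const.mul continuous_id))
    · exact (Real.continuous_rpow_const (by linarith)).comp
        ((continuous_pow 2).sub continuous_const)
  have hint_g2 : IntegrableOn (fun t => (2:ℝ)^(ν-1/2) * h t) (Set.Ioi 1) :=
    hint_h.const_mul _
  have hint_f : IntegrableOn f (Set.Ioi 1) := by
    refine Integrable.mono' hint_g2 hfcont.aestronglyMeasurable ?_
    rw [ae_restrict_iff' measurableSet_Ioi]
    refine Filter.Eventually.of_forall (fun t ht => ?_)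
    simp only [Set.mem_Ioi] at ht
    have hf0 : 0 ≤ f t := by
      apply mul_nonneg (Real.exp_pos _).le
      exact Real.rpow_nonneg (by nlinarith) _
    rw [Real.norm_eq_abs, abs_of_nonneg hf0]
    exact (hflt t ht).le
  -- strict integral inequality
  have hkey : ∫ t in Set.Ioi (1:ℝ), f t < ∫ t in Set.Ioi (1:ℝ), (2:ℝ)^(ν-1/2) * h t := by
    have hsub : IntegrableOn (fun t => (2:ℝ)^(ν-1/2) * h t - f t) (Set.Ioi 1) :=
      hint_g2.sub hint_f
    have hpos : 0 < ∫ t in Set.Ioi (1:ℝ), ((2:ℝ)^(ν-1/2) * h t - f t) := by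
      rw [MeasureTheory.setIntegral_pos_iff_support_of_nonneg_ae ?_ hsub]
      · calc (0:ENNReal) < volume (Set.Ioi (1:ℝ)) := by
              rw [Real.volume_Ioi]; exact ENNReal.zero_lt_top
          _ ≤ volume ((Function.support fun t => (2:ℝ)^(ν-1/2) * h t - f t) ∩ Set.Ioi 1) := by
              refine measure_mono (fun t ht => ⟨?_, ht⟩)
              simp only [Function.mem_support]
              exact sub_ne_zero.2 (hflt t ht).ne'
      · filter_upwards [MeasureTheory.ae_restrict_mem measurableSet_Ioi] with t ht
        exact sub_nonneg.2 (hflt t ht).le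
    have := MeasureTheory.integral_sub hint_g2 hint_f
    rw [this] at hpos
    linarith
  -- conclude
  have hC : 0 < Real.sqrt Real.pi * (x / 2) ^ ν / Real.Gamma b := by
    apply div_pos _ hGb
    exact mul_pos (Real.sqrt_pos.2 Real.pi_pos) (Real.rpow_pos_of_pos (by linarith) _)
  have hmain : besselK ν x <
      (Real.sqrt Real.pi * (x / 2) ^ ν / Real.Gamma b) *
        ((2:ℝ)^(ν-1/2) * (Real.exp (-x) * (Real.Gamma a * Real.Gamma b / Real.Gamma (x+1)))) := by
    rw [besselK]
    have hbK : ν + 1/2 = b := hb_def.symm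
    rw [hbK]
    apply mul_lt_mul_of_pos_left _ hC
    calc (∫ t in Set.Ioi (1:ℝ), Real.exp (-x * t) * (t ^ 2 - 1) ^ (ν - 1 / 2))
        = ∫ t in Set.Ioi (1:ℝ), f t := rfl
      _ < ∫ t in Set.Ioi (1:ℝ), (2:ℝ)^(ν-1/2) * h t := hkey
      _ = (2:ℝ)^(ν-1/2) * ∫ t in Set.Ioi (1:ℝ), h t := MeasureTheory.integral_const_mul _ _
      _ = (2:ℝ)^(ν-1/2) * (Real.exp (-x) * (Real.Gamma a * Real.Gamma b / Real.Gamma (x+1))) := by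
          rw [hJ]
  refine hmain.trans_le (le_of_eq ?_)
  -- algebraic identity
  have h2ν : (0:ℝ) < (2:ℝ)^ν := Real.rpow_pos_of_pos (by norm_num) _
  have hsqrt2 : (0:ℝ) < Real.sqrt 2 := Real.sqrt_pos.2 (by norm_num)
  have hpow : ((2:ℝ))^(ν-1/2) = (2:ℝ)^ν / Real.sqrt 2 := by
    rw [Real.rpow_sub (by norm_num), Real.sqrt_eq_rpow]
  have hxdiv : (x/2)^ν = x^ν / (2:ℝ)^ν := Real.div_rpow hx0.le (by norm_num : (0:ℝ) ≤ 2) ν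
  have hsqrtdiv : Real.sqrt (Real.pi / 2) = Real.sqrt Real.pi / Real.sqrt 2 :=
    Real.sqrt_div Real.pi_pos.le 2
  rw [hpow, hxdiv, hsqrtdiv]
  field_simp
end

section
/- For all real x > 0 and 0 < a < 1, Γ(x + a)/Γ(x + 1) > 1/(x + a)^{1−a}. -/
open Real MeasureTheory

lemma gautschi_le (a : ℝ) (ha0 : 0 < a) (ha1 : a < 1) (y : ℝ) (hy : 0 < y) :
    Real.Gamma (y + 1) ≤ Real.Gamma (y + a) * (y + a) ^ (1 - a) := by
  have hya : 0 < y + a := by linarith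
  have hG : 0 < Real.Gamma (y + a) := Real.Gamma_pos_of_pos hya
  have hG1 : 0 < Real.Gamma (y + a + 1) := Real.Gamma_pos_of_pos (by linarith)
  have h := Real.convexOn_log_Gamma.2 (Set.mem_Ioi.mpr hya)
    (Set.mem_Ioi.mpr (show (0:ℝ) < y + a + 1 by linarith)) ha0.le
    (by linarith : (0:ℝ) ≤ 1 - a) (by ring)
  simp only [smul_eq_mul, Function.comp] at h
  rw [show a * (y + a) + (1 - a) * (y + a + 1) = y + 1 by ring] at h
  calc Real.Gamma (y + 1) = Real.exp (Real.log (Real.Gamma (y + 1))) :=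
        (Real.exp_log (Real.Gamma_pos_of_pos (by linarith))).symm
    _ ≤ Real.exp (a * Real.log (Real.Gamma (y + a)) +
        (1 - a) * Real.log (Real.Gamma (y + a + 1))) := Real.exp_le_exp.mpr h
    _ = Real.Gamma (y + a) ^ a * Real.Gamma (y + a + 1) ^ (1 - a) := by
        rw [Real.exp_add, mul_comm a, mul_comm (1 - a), ← Real.rpow_def_of_pos hG,
          ← Real.rpow_def_of_pos hG1]
    _ = Real.Gamma (y + a) * (y + a) ^ (1 - a) := by
        rw [Real.Gamma_add_one hya.ne', Real.mul_rpow hya.le hG.le]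
        rw [show Real.Gamma (y+a) ^ a * ((y+a) ^ (1-a) * Real.Gamma (y+a) ^ (1-a))
            = Real.Gamma (y+a) ^ a * Real.Gamma (y+a) ^ (1-a) * (y+a) ^ (1-a) by ring,
          ← Real.rpow_add hG]
        norm_num

theorem stmt9 (x a : ℝ) (hx : 0 < x) (ha0 : 0 < a) (ha1 : a < 1) :
    Real.Gamma (x + a) / Real.Gamma (x + 1) > 1 / (x + a) ^ (1 - a) := by
  have hxa : 0 < x + a := by linarith
  have hG : 0 < Real.Gamma (x + a) := Real.Gamma_pos_of_pos hxa
  have hG1 : 0 < Real.Gamma (x + 1) := Real.Gamma_pos_of_pos (by linarith)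
  have hp : (0:ℝ) < (x + a) ^ (1 - a) := Real.rpow_pos_of_pos hxa _
  -- strict AM-GM via strict concavity of log
  have hlog := strictConcaveOn_log_Ioi.2 (Set.mem_Ioi.mpr hxa)
    (Set.mem_Ioi.mpr (show (0:ℝ) < x + a + 1 by linarith))
    (by linarith : x + a ≠ x + a + 1) ha0 (by linarith : (0:ℝ) < 1 - a) (by ring)
  simp only [smul_eq_mul] at hlog
  rw [show a * (x + a) + (1 - a) * (x + a + 1) = x + 1 by ring] at hlog
  have hamgm : (x + a) ^ a * (x + a + 1) ^ (1 - a) < x + 1 := by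
    calc (x + a) ^ a * (x + a + 1) ^ (1 - a)
        = Real.exp (a * Real.log (x + a) + (1 - a) * Real.log (x + a + 1)) := by
          rw [Real.exp_add, mul_comm a, mul_comm (1 - a), ← Real.rpow_def_of_pos hxa,
            ← Real.rpow_def_of_pos (show (0:ℝ) < x + a + 1 by linarith)]
      _ < Real.exp (Real.log (x + 1)) := Real.exp_lt_exp.mpr hlog
      _ = x + 1 := Real.exp_log (by linarith)
  -- nonstrict Gautschi at x+1
  have key := gautschi_le a ha0 ha1 (x + 1) (by linarith)
  rw [show x + 1 + a = x + a + 1 by ring, Real.Gamma_add_one hxa.ne',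
    show x + 1 + 1 = x + 1 + 1 from rfl, Real.Gamma_add_one (show x + 1 ≠ 0 by linarith)] at key
  -- key : (x+1) * Γ(x+1) ≤ (x+a) * Γ(x+a) * (x+a+1)^(1-a)
  have h2 : (x + a) * (x + a + 1) ^ (1 - a) < (x + 1) * (x + a) ^ (1 - a) := by
    have := mul_lt_mul_of_pos_right hamgm hp
    calc (x + a) * (x + a + 1) ^ (1 - a)
        = (x + a) ^ a * (x + a) ^ (1 - a) * (x + a + 1) ^ (1 - a) := by
          rw [← Real.rpow_add hxa]; norm_num
      _ = (x + a) ^ a * (x + a + 1) ^ (1 - a) * (x + a) ^ (1 - a) := by ring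
      _ < (x + 1) * (x + a) ^ (1 - a) := this
  have hmain : Real.Gamma (x + 1) < Real.Gamma (x + a) * (x + a) ^ (1 - a) := by
    have h3 : (x + 1) * Real.Gamma (x + 1) < (x + 1) * (Real.Gamma (x + a) * (x + a) ^ (1 - a)) := by
      calc (x + 1) * Real.Gamma (x + 1) ≤ (x + a) * Real.Gamma (x + a) * (x + a + 1) ^ (1 - a) := key
        _ = Real.Gamma (x + a) * ((x + a) * (x + a + 1) ^ (1 - a)) := by ring
        _ < Real.Gamma (x + a) * ((x + 1) * (x + a) ^ (1 - a)) := by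
            exact mul_lt_mul_of_pos_left h2 hG
        _ = (x + 1) * (Real.Gamma (x + a) * (x + a) ^ (1 - a)) := by ring
    exact lt_of_mul_lt_mul_left h3 (by linarith)
  rw [gt_iff_lt, div_lt_div_iff₀ hp hG1]
  nlinarith [hmain]
end

section
/- For all x > 0 and real ν with 0 ≤ ν < 1/2, one has K_ν(x) < K_{1/2}(x) = √(π/(2x)) e^{−x}, hence √(2x/π) e^x K_ν(x) < 1. -/
open Real MeasureTheory


section aux

open Set

lemma shift_pre : (fun s : ℝ => s + 1) ⁻¹' (Ioi 1) = Ioi 0 := by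
  ext s; simp [lt_add_iff_pos_left]

lemma gamma_integrable {x μ : ℝ} (hx : 0 < x) (hμ : -1 < μ) :
    IntegrableOn (fun s : ℝ => s ^ μ * Real.exp (-(x * s))) (Ioi 0) := by
  have h := integrableOn_rpow_mul_exp_neg_mul_rpow hμ one_pos hx
  refine h.congr_fun (fun s hs => ?_) measurableSet_Ioi
  simp only [Real.rpow_one, neg_mul]

lemma shifted_integrable {x μ : ℝ} (hx : 0 < x) (hμ : -1 < μ) :
    IntegrableOn (fun t : ℝ => Real.exp (-x * t) * (t - 1) ^ μ) (Ioi 1) := by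
  have hmp : MeasurePreserving (fun s : ℝ => s + 1) volume volume :=
    measurePreserving_add_right volume 1
  have hemb : MeasurableEmbedding (fun s : ℝ => s + 1) :=
    (MeasurableEquiv.addRight (1 : ℝ)).measurableEmbedding
  rw [← (hmp.integrableOn_comp_preimage hemb), shift_pre]
  have : IntegrableOn (fun s : ℝ => Real.exp (-x) * (s ^ μ * Real.exp (-(x * s)))) (Ioi 0) :=
    ((gamma_integrable hx hμ).const_mul _)
  refine this.congr_fun (fun s hs => ?_) measurableSet_Ioi
  simp only [Function.comp]
  rw [add_sub_cancel_right, show -x * (s + 1) = -x + -(x * s) by ring, Real.exp_add]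
  ring

lemma shifted_value {x μ : ℝ} (hx : 0 < x) (hμ : -1 < μ) :
    ∫ t in Ioi (1:ℝ), Real.exp (-x * t) * (t - 1) ^ μ =
      Real.exp (-x) * ((1 / x) ^ (μ + 1) * Real.Gamma (μ + 1)) := by
  have hmp : MeasurePreserving (fun s : ℝ => s + 1) volume volume :=
    measurePreserving_add_right volume 1
  have hemb : MeasurableEmbedding (fun s : ℝ => s + 1) :=
    (MeasurableEquiv.addRight (1 : ℝ)).measurableEmbedding
  have h1 := hmp.setIntegral_preimage_emb hemb
    (fun t : ℝ => Real.exp (-x * t) * (t - 1) ^ μ) (Ioi 1)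
  rw [shift_pre] at h1
  rw [← h1]
  have h2 : ∀ s ∈ Ioi (0:ℝ),
      Real.exp (-x * (s + 1)) * ((s + 1) - 1) ^ μ
        = Real.exp (-x) * (s ^ ((μ + 1) - 1) * Real.exp (-(x * s))) := by
    intro s _
    rw [add_sub_cancel_right, add_sub_cancel_right,
      show -x * (s + 1) = -x + -(x * s) by ring, Real.exp_add]
    ring
  rw [setIntegral_congr_fun measurableSet_Ioi h2, integral_const_mul,
    integral_rpow_mul_exp_neg_mul_Ioi (by linarith) hx]

end aux

theorem stmt11 (x ν : ℝ) (hx : 0 < x) (hν0 : 0 ≤ ν) (hν : ν < 1 / 2) :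
    besselK ν x < besselK (1 / 2) x ∧
      Real.sqrt (2 * x / Real.pi) * Real.exp x * besselK ν x < 1 := by
  set μ := ν - 1/2 with hμdef
  have hμ0 : μ < 0 := by simp only [hμdef]; linarith
  have hμ1 : -1 < μ := by simp only [hμdef]; linarith
  set F : ℝ → ℝ := fun t => Real.exp (-x * t) * (t ^ 2 - 1) ^ μ with hF
  set G : ℝ → ℝ := fun t => (2:ℝ) ^ μ * (Real.exp (-x * t) * (t - 1) ^ μ) with hG
  have hGint : IntegrableOn G (Set.Ioi 1) := (shifted_integrable hx hμ1).const_mul _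
  have hlt : ∀ t ∈ Set.Ioi (1:ℝ), F t < G t := by
    intro t ht
    have ht1 : (1:ℝ) < t := ht
    have h1 : t ^ 2 - 1 = (t - 1) * (t + 1) := by ring
    have h2 : ((t - 1) * (t + 1)) ^ μ = (t - 1) ^ μ * (t + 1) ^ μ :=
      Real.mul_rpow (by linarith) (by linarith)
    have h3 : (t + 1) ^ μ < (2:ℝ) ^ μ :=
      Real.rpow_lt_rpow_of_neg (by norm_num) (by linarith) hμ0
    have h4 : 0 < Real.exp (-x * t) * (t - 1) ^ μ :=
      mul_pos (Real.exp_pos _) (Real.rpow_pos_of_pos (by linarith) _)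
    calc F t = (Real.exp (-x * t) * (t - 1) ^ μ) * (t + 1) ^ μ := by
          simp only [hF, h1, h2]; ring
      _ < (Real.exp (-x * t) * (t - 1) ^ μ) * (2:ℝ) ^ μ := (mul_lt_mul_iff_right₀ h4).mpr h3
      _ = G t := by simp only [hG]; ring
  have hFnn : ∀ t ∈ Set.Ioi (1:ℝ), 0 ≤ F t := by
    intro t ht
    have ht1 : (1:ℝ) < t := ht
    have h5 : (0:ℝ) < t ^ 2 - 1 := by nlinarith
    have := Real.rpow_pos_of_pos h5 μ
    simp only [hF]
    positivity
  have hFmeas : AEStronglyMeasurable F (volume.restrict (Set.Ioi 1)) := by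
    refine ContinuousOn.aestronglyMeasurable ?_ measurableSet_Ioi
    apply ContinuousOn.mul
    · exact ((Real.continuous_exp.comp (continuous_const.mul continuous_id))).continuousOn
    · refine ContinuousOn.rpow_const ((continuous_pow 2).sub continuous_const).continuousOn ?_
      intro t ht
      have ht1 : (1:ℝ) < t := ht
      left
      have : (0:ℝ) < t ^ 2 - 1 := by nlinarith
      exact this.ne'
  have hFint : IntegrableOn F (Set.Ioi 1) := by
    refine hGint.mono' hFmeas ?_
    filter_upwards [ae_restrict_mem measurableSet_Ioi] with t ht
    rw [Real.norm_eq_abs, abs_of_nonneg (hFnn t ht)]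
    exact (hlt t ht).le
  have hint_lt : ∫ t in Set.Ioi (1:ℝ), F t < ∫ t in Set.Ioi (1:ℝ), G t := by
    have hnn : 0 ≤ᶠ[ae (volume.restrict (Set.Ioi (1:ℝ)))] fun t => G t - F t := by
      filter_upwards [ae_restrict_mem measurableSet_Ioi] with t ht
      exact sub_nonneg.mpr (hlt t ht).le
    have hintsub : IntegrableOn (fun t => G t - F t) (Set.Ioi (1:ℝ)) := hGint.sub hFint
    have hdiff : 0 < ∫ t in Set.Ioi (1:ℝ), (G t - F t) := by
      rw [setIntegral_pos_iff_support_of_nonneg_ae hnn hintsub]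
      have hsub : Set.Ioi (1:ℝ) ⊆ Function.support (fun t => G t - F t) ∩ Set.Ioi 1 :=
        fun t ht => ⟨sub_ne_zero.mpr (hlt t ht).ne', ht⟩
      calc (0:ENNReal) < volume (Set.Ioi (1:ℝ)) := by simp [Real.volume_Ioi]
        _ ≤ _ := measure_mono hsub
    rw [integral_sub hGint hFint] at hdiff
    linarith
  have hGval : ∫ t in Set.Ioi (1:ℝ), G t
      = (2:ℝ) ^ μ * (Real.exp (-x) * ((1 / x) ^ (μ + 1) * Real.Gamma (μ + 1))) := by
    simp only [hG]
    rw [integral_const_mul, shifted_value hx hμ1]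
  have hKhalf : besselK (1/2) x
      = Real.sqrt Real.pi * ((x / 2) ^ ((1:ℝ)/2) * (Real.exp (-x) * (1 / x))) := by
    unfold besselK
    rw [show (1:ℝ)/2 + 1/2 = 1 by norm_num, Real.Gamma_one, div_one]
    have hcong : ∀ t ∈ Set.Ioi (1:ℝ),
        Real.exp (-x * t) * (t ^ 2 - 1) ^ ((1:ℝ)/2 - 1/2)
          = Real.exp (-x * t) * (t - 1) ^ (0:ℝ) := by
      intro t ht; norm_num
    rw [setIntegral_congr_fun measurableSet_Ioi hcong, shifted_value hx (by norm_num)]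
    norm_num [Real.Gamma_one]
    ring
  have hΓpos : 0 < Real.Gamma (ν + 1/2) := Real.Gamma_pos_of_pos (by linarith)
  have hC : 0 < Real.sqrt Real.pi * (x / 2) ^ ν / Real.Gamma (ν + 1 / 2) := by
    have h2 : 0 < Real.sqrt Real.pi := Real.sqrt_pos.mpr Real.pi_pos
    have h3 : 0 < (x / 2) ^ ν := Real.rpow_pos_of_pos (by linarith) _
    positivity
  -- key algebraic identity
  have h2x : (0:ℝ) < x / 2 := by linarith
  have h1x : (0:ℝ) < 1 / x := by positivity
  have key2 : (x/2) ^ ν * (2:ℝ) ^ μ * (1/x) ^ (ν + 1/2) = (x/2) ^ ((1:ℝ)/2) * (1/x) := by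
    rw [hμdef, Real.rpow_sub (by norm_num : (0:ℝ) < 2), Real.rpow_add h1x]
    have hprod : (x/2) ^ ν * ((1/x) ^ ν * (2:ℝ) ^ ν) = 1 := by
      rw [← Real.mul_rpow (by positivity) (by norm_num),
        ← Real.mul_rpow (by positivity) (by positivity),
        show (1/x) * 2 = 2/x by ring, show (x/2) * (2/x) = 1 by field_simp,
        Real.one_rpow]
    have hhalf : (1/x) ^ ((1:ℝ)/2) / (2:ℝ) ^ ((1:ℝ)/2) = (x/2) ^ ((1:ℝ)/2) * (1/x) := by
      rw [← Real.sqrt_eq_rpow, ← Real.sqrt_eq_rpow, ← Real.sqrt_eq_rpow,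
        ← Real.sqrt_div (by positivity : (0:ℝ) ≤ 1/x) 2]
      rw [show Real.sqrt (x/2) * (1/x) = Real.sqrt ((x/2) * (1/x)^2) by
        rw [Real.sqrt_mul h2x.le, Real.sqrt_sq h1x.le]]
      congr 1
      field_simp
    calc (x/2) ^ ν * ((2:ℝ) ^ ν / (2:ℝ) ^ ((1:ℝ)/2)) * ((1/x) ^ ν * (1/x) ^ ((1:ℝ)/2))
        = ((x/2) ^ ν * ((1/x) ^ ν * (2:ℝ) ^ ν)) * ((1/x) ^ ((1:ℝ)/2) / (2:ℝ) ^ ((1:ℝ)/2)) := by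
          ring
      _ = (x/2) ^ ((1:ℝ)/2) * (1/x) := by rw [hprod, one_mul, hhalf]
  have hkey : (Real.sqrt Real.pi * (x / 2) ^ ν / Real.Gamma (ν + 1 / 2)) *
      ((2:ℝ) ^ μ * (Real.exp (-x) * ((1 / x) ^ (μ + 1) * Real.Gamma (μ + 1))))
      = besselK (1/2) x := by
    rw [hKhalf, show μ + 1 = ν + 1/2 by rw [hμdef]; ring]
    calc (Real.sqrt Real.pi * (x / 2) ^ ν / Real.Gamma (ν + 1 / 2)) *
        ((2:ℝ) ^ μ * (Real.exp (-x) * ((1 / x) ^ (ν + 1/2) * Real.Gamma (ν + 1/2))))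
        = Real.sqrt Real.pi * Real.exp (-x) * ((x/2) ^ ν * (2:ℝ) ^ μ * (1/x) ^ (ν + 1/2))
            * (Real.Gamma (ν + 1/2) / Real.Gamma (ν + 1/2)) := by ring
      _ = _ := by rw [div_self hΓpos.ne', key2]; ring
  have hmain : besselK ν x < besselK (1/2) x := by
    have : besselK ν x = (Real.sqrt Real.pi * (x / 2) ^ ν / Real.Gamma (ν + 1 / 2)) *
        ∫ t in Set.Ioi (1:ℝ), F t := rfl
    rw [this, ← hkey, ← hGval]
    exact (mul_lt_mul_iff_right₀ hC).mpr hint_lt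
  refine ⟨hmain, ?_⟩
  have hSpos : 0 < Real.sqrt (2 * x / Real.pi) * Real.exp x := by positivity
  have hone : Real.sqrt (2 * x / Real.pi) * Real.exp x * besselK (1/2) x = 1 := by
    rw [hKhalf]
    have e1 : Real.sqrt (2 * x / Real.pi) * Real.sqrt Real.pi = Real.sqrt (2 * x) := by
      rw [← Real.sqrt_mul (by positivity)]
      congr 1
      field_simp
    have e2 : Real.sqrt (2 * x) * Real.sqrt (x / 2) = x := by
      rw [← Real.sqrt_mul (by positivity), show 2 * x * (x/2) = x ^ 2 by ring,
        Real.sqrt_sq hx.le]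
    have e3 : (x/2) ^ ((1:ℝ)/2) = Real.sqrt (x/2) := (Real.sqrt_eq_rpow _).symm
    rw [e3]
    calc Real.sqrt (2 * x / Real.pi) * Real.exp x *
          (Real.sqrt Real.pi * (Real.sqrt (x/2) * (Real.exp (-x) * (1 / x))))
        = (Real.sqrt (2 * x / Real.pi) * Real.sqrt Real.pi) * Real.sqrt (x/2) * (1/x) *
            (Real.exp x * Real.exp (-x)) := by ring
      _ = 1 := by
          rw [e1, ← Real.exp_add, add_neg_cancel, Real.exp_zero, e2]
          field_simp
  calc Real.sqrt (2 * x / Real.pi) * Real.exp x * besselK ν x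
      < Real.sqrt (2 * x / Real.pi) * Real.exp x * besselK (1/2) x :=
        (mul_lt_mul_iff_right₀ hSpos).mpr hmain
    _ = 1 := hone
end

section
/- For x > 0, one has 1/√(x + 1/2) < Γ(x + 1/2)/Γ(x + 1) < √(2/π) · e^x · K_0(x), where K_0 is the modified Bessel function of the second kind of order zero. -/
open Real MeasureTheory


open Set Filter

/-- strict comparison of integrals over `Ioi 0`. -/
private lemma aux_integral_lt {f g : ℝ → ℝ}
    (hf : IntegrableOn f (Ioi 0)) (hg : IntegrableOn g (Ioi 0))
    (h : ∀ s ∈ Ioi (0 : ℝ), f s < g s) :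
    (∫ s in Ioi (0 : ℝ), f s) < ∫ s in Ioi (0 : ℝ), g s := by
  have hsub : IntegrableOn (fun s => g s - f s) (Ioi (0 : ℝ)) := hg.sub hf
  have hae : 0 ≤ᵐ[volume.restrict (Ioi (0 : ℝ))] fun s => g s - f s :=
    (ae_restrict_iff' measurableSet_Ioi).2 (Filter.Eventually.of_forall
      fun s hs => sub_nonneg.2 (h s hs).le)
  have hpos : 0 < ∫ s in Ioi (0 : ℝ), (g s - f s) := by
    rw [setIntegral_pos_iff_support_of_nonneg_ae hae hsub]
    have hss : Ioi (0 : ℝ) ⊆ Function.support (fun s => g s - f s) ∩ Ioi 0 :=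
      fun s hs => ⟨sub_ne_zero.2 (h s hs).ne', hs⟩
    refine lt_of_lt_of_le ?_ (measure_mono hss)
    rw [Real.volume_Ioi]
    exact ENNReal.zero_lt_top
  rw [integral_sub hg hf] at hpos
  linarith

/-- integrability of the third integrand -/
private lemma aux_int_g3 {x : ℝ} (hx : 0 < x) :
    IntegrableOn (fun s : ℝ => (s ^ 2 + 2 * s) ^ (-(1/2) : ℝ) * Real.exp (-(x * s)))
      (Ioi (0 : ℝ)) := by
  rw [← Ioc_union_Ioi_eq_Ioi (zero_le_one (α := ℝ)), integrableOn_union]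
  constructor
  · refine Integrable.mono' (g := fun s : ℝ => s ^ (-(1/2) : ℝ))
      ((intervalIntegral.intervalIntegrable_rpow' (by norm_num)).1) ?_ ?_
    · apply Measurable.aestronglyMeasurable
      fun_prop
    · refine (ae_restrict_iff' measurableSet_Ioc).2 (.of_forall fun s hs => ?_)
      obtain ⟨hs0, hs1⟩ := hs
      have h1 : (0:ℝ) < s ^ 2 + 2 * s := by nlinarith
      have h2 : (s ^ 2 + 2 * s) ^ (-(1/2) : ℝ) ≤ (2 * s) ^ (-(1/2) : ℝ) :=
        Real.rpow_le_rpow_of_nonpos (by linarith) (by nlinarith) (by norm_num)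
      have h3 : (2 * s) ^ (-(1/2) : ℝ) = 2 ^ (-(1/2) : ℝ) * s ^ (-(1/2) : ℝ) :=
        Real.mul_rpow (by norm_num) hs0.le
      have h4 : (2:ℝ) ^ (-(1/2) : ℝ) ≤ 1 :=
        Real.rpow_le_one_of_one_le_of_nonpos (by norm_num) (by norm_num)
      have h5 : (0:ℝ) ≤ s ^ (-(1/2) : ℝ) := Real.rpow_nonneg hs0.le _
      have h6 : Real.exp (-(x * s)) ≤ 1 := by
        rw [Real.exp_le_one_iff]; nlinarith
      have h7 : (0:ℝ) < (s ^ 2 + 2 * s) ^ (-(1/2) : ℝ) := Real.rpow_pos_of_pos h1 _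
      rw [Real.norm_eq_abs, abs_of_nonneg (by positivity)]
      calc (s ^ 2 + 2 * s) ^ (-(1/2) : ℝ) * Real.exp (-(x * s))
          ≤ (s ^ 2 + 2 * s) ^ (-(1/2) : ℝ) * 1 := by
            exact mul_le_mul_of_nonneg_left h6 h7.le
        _ = (s ^ 2 + 2 * s) ^ (-(1/2) : ℝ) := mul_one _
        _ ≤ (2 * s) ^ (-(1/2) : ℝ) := h2
        _ = 2 ^ (-(1/2) : ℝ) * s ^ (-(1/2) : ℝ) := h3
        _ ≤ 1 * s ^ (-(1/2) : ℝ) := mul_le_mul_of_nonneg_right h4 h5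
        _ = s ^ (-(1/2) : ℝ) := one_mul _
  · refine Integrable.mono' (g := fun s : ℝ => Real.exp (-x * s))
      (exp_neg_integrableOn_Ioi 1 hx) ?_ ?_
    · apply Measurable.aestronglyMeasurable
      fun_prop
    · refine (ae_restrict_iff' measurableSet_Ioi).2 (.of_forall fun s hs => ?_)
      have hs1 : (1:ℝ) < s := hs
      have h1 : (1:ℝ) ≤ s ^ 2 + 2 * s := by nlinarith
      have h2 : (s ^ 2 + 2 * s) ^ (-(1/2) : ℝ) ≤ 1 :=
        Real.rpow_le_one_of_one_le_of_nonpos h1 (by norm_num)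
      have h7 : (0:ℝ) < (s ^ 2 + 2 * s) ^ (-(1/2) : ℝ) :=
        Real.rpow_pos_of_pos (by nlinarith) _
      rw [Real.norm_eq_abs, abs_of_nonneg (by positivity)]
      show _ ≤ Real.exp (-x * s)
      rw [neg_mul]
      calc (s ^ 2 + 2 * s) ^ (-(1/2) : ℝ) * Real.exp (-(x * s))
          ≤ 1 * Real.exp (-(x * s)) := by
            exact mul_le_mul_of_nonneg_right h2 (Real.exp_pos _).le
        _ = Real.exp (-(x * s)) := one_mul _

private lemma aux_beta_interval {x : ℝ} (hx : 0 < x) :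
    Real.Gamma (x + 1/2) * Real.sqrt Real.pi =
      Real.Gamma (x + 1) * ∫ t in (0:ℝ)..1, t ^ (x - 1/2) * (1 - t) ^ (-(1/2) : ℝ) := by
  have h := Complex.Gamma_mul_Gamma_eq_betaIntegral (s := ((x:ℂ) + 1/2)) (t := (1/2 : ℂ))
    (by simp [Complex.add_re]; norm_num; linarith) (by norm_num)
  have h1 : ((x:ℂ) + 1/2) = ((x + 1/2 : ℝ) : ℂ) := by push_cast; ring
  have h2 : ((x:ℂ) + 1/2 + 1/2) = ((x + 1 : ℝ) : ℂ) := by push_cast; ring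
  have h3 : Complex.betaIntegral ((x:ℂ) + 1/2) (1/2) =
      ((∫ t in (0:ℝ)..1, t ^ (x - 1/2) * (1 - t) ^ (-(1/2) : ℝ) : ℝ) : ℂ) := by
    rw [Complex.betaIntegral, ← intervalIntegral.integral_ofReal]
    apply intervalIntegral.integral_congr
    intro t ht
    rw [uIcc_of_le (zero_le_one)] at ht
    obtain ⟨ht0, ht1⟩ := ht
    beta_reduce
    have e1 : ((x:ℂ) + 1/2 - 1) = ((x - 1/2 : ℝ) : ℂ) := by push_cast; ring
    have e2 : ((1:ℂ)/2 - 1) = ((-(1/2) : ℝ) : ℂ) := by norm_num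
    have e3 : (1 - (t:ℂ)) = ((1 - t : ℝ) : ℂ) := by push_cast; ring
    rw [e1, e3, e2, ← Complex.ofReal_cpow ht0,
      ← Complex.ofReal_cpow (by linarith : (0:ℝ) ≤ 1 - t), ← Complex.ofReal_mul]
  rw [h3, h2, h1, Complex.Gamma_ofReal, Complex.Gamma_ofReal] at h
  have h4 : (Complex.Gamma (1/2 : ℂ)) = ((Real.sqrt Real.pi : ℝ) : ℂ) := by
    rw [(by norm_num : (1/2 : ℂ) = ((1/2 : ℝ) : ℂ)), Complex.Gamma_ofReal,
      Real.Gamma_one_half_eq]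
  rw [h4, ← Complex.ofReal_mul, ← Complex.ofReal_mul] at h
  exact_mod_cast h

private lemma aux_subst (x : ℝ) :
    (∫ t in (0:ℝ)..1, t ^ (x - 1/2) * (1 - t) ^ (-(1/2) : ℝ)) =
      ∫ s in Ioi (0:ℝ), (1 - Real.exp (-s)) ^ (-(1/2) : ℝ) * Real.exp (-((x + 1/2) * s)) := by
  rw [intervalIntegral.integral_of_le zero_le_one, integral_Ioc_eq_integral_Ioo]
  have himg : Ioo (0:ℝ) 1 = (fun s => Real.exp (-s)) '' Ioi 0 := by
    ext u
    constructor
    · rintro ⟨hu0, hu1⟩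
      exact ⟨-Real.log u, by simpa using Real.log_neg hu0 hu1, by simp [Real.exp_log hu0]⟩
    · rintro ⟨s, hs, rfl⟩
      exact ⟨Real.exp_pos _, by simpa using Real.exp_lt_one_iff.2 (neg_lt_zero.2 hs)⟩
  rw [himg, integral_image_eq_integral_abs_deriv_smul (f' := fun s => -Real.exp (-s))
      measurableSet_Ioi
      (fun s _ => by
        simpa [Function.comp_def] using ((Real.hasDerivAt_exp (-s)).comp s (hasDerivAt_neg s)).hasDerivWithinAt)
      (fun a _ b _ h => by
        have := Real.exp_injective h
        linarith)]
  refine setIntegral_congr_fun measurableSet_Ioi (fun s _ => ?_)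
  rw [smul_eq_mul, abs_neg, abs_of_pos (Real.exp_pos _),
    Real.rpow_def_of_pos (Real.exp_pos _), Real.log_exp]
  calc Real.exp (-s) * (Real.exp (-s * (x - 1/2)) * (1 - Real.exp (-s)) ^ (-(1/2) : ℝ))
      = (1 - Real.exp (-s)) ^ (-(1/2) : ℝ) * (Real.exp (-s) * Real.exp (-s * (x - 1/2))) := by
        ring
    _ = (1 - Real.exp (-s)) ^ (-(1/2) : ℝ) * Real.exp (-((x + 1/2) * s)) := by
        rw [← Real.exp_add]
        congr 1
        ring

private lemma aux_shift (x : ℝ) :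
    (∫ t in Ioi (1:ℝ), Real.exp (-x * t) * (t ^ 2 - 1) ^ (-(1/2) : ℝ)) =
      Real.exp (-x) *
        ∫ s in Ioi (0:ℝ), (s ^ 2 + 2 * s) ^ (-(1/2) : ℝ) * Real.exp (-(x * s)) := by
  have himg : Ioi (1:ℝ) = (fun s => s + 1) '' Ioi 0 := by
    rw [image_add_const_Ioi, zero_add]
  rw [himg, integral_image_eq_integral_abs_deriv_smul (f := fun s => s + 1)
      (f' := fun _ => (1:ℝ)) measurableSet_Ioi
      (fun s _ => by simpa using ((hasDerivAt_id s).add_const 1).hasDerivWithinAt)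
      (fun a _ b _ h => by simpa using h), ← integral_const_mul]
  refine setIntegral_congr_fun measurableSet_Ioi (fun s _ => ?_)
  rw [smul_eq_mul, abs_one, one_mul]
  have h1 : ((s + 1) ^ 2 - 1 : ℝ) = s ^ 2 + 2 * s := by ring
  have h2 : Real.exp (-x * (s + 1)) = Real.exp (-x) * Real.exp (-(x * s)) := by
    rw [← Real.exp_add]; congr 1; ring
  rw [h1, h2]; ring

private lemma aux_g1 {x : ℝ} (hx : 0 < x) :
    (∫ s in Ioi (0:ℝ), s ^ (-(1/2) : ℝ) * Real.exp (-((x + 1/2) * s))) =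
      Real.sqrt Real.pi / Real.sqrt (x + 1/2) := by
  have h := Real.integral_rpow_mul_exp_neg_mul_Ioi (a := (1/2 : ℝ)) (r := x + 1/2)
    (by norm_num) (by linarith)
  rw [show ((1:ℝ)/2 - 1) = -(1/2) by norm_num] at h
  rw [h, Real.Gamma_one_half_eq, ← Real.sqrt_eq_rpow, one_div,
    Real.sqrt_inv]
  ring

private lemma aux_p1 {x s : ℝ} (hs : 0 < s) :
    s ^ (-(1/2) : ℝ) * Real.exp (-((x + 1/2) * s)) <
      (1 - Real.exp (-s)) ^ (-(1/2) : ℝ) * Real.exp (-((x + 1/2) * s)) := by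
  have h1 : 0 < 1 - Real.exp (-s) := by
    have := Real.exp_lt_one_iff.2 (neg_lt_zero.2 hs); linarith
  have h2 : 1 - Real.exp (-s) < s := by
    have := Real.add_one_lt_exp (neg_ne_zero.2 hs.ne')
    linarith
  exact mul_lt_mul_of_pos_right (Real.rpow_lt_rpow_of_neg h1 h2 (by norm_num))
    (Real.exp_pos _)

private lemma aux_p2 {x s : ℝ} (hs : 0 < s) :
    (1 - Real.exp (-s)) ^ (-(1/2) : ℝ) * Real.exp (-((x + 1/2) * s)) <
      Real.sqrt 2 * ((s ^ 2 + 2 * s) ^ (-(1/2) : ℝ) * Real.exp (-(x * s))) := by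
  have h1 : 0 < 1 - Real.exp (-s) := by
    have := Real.exp_lt_one_iff.2 (neg_lt_zero.2 hs); linarith
  have hes : 0 < Real.exp s - 1 := by
    have := Real.add_one_lt_exp hs.ne'; linarith
  have hkey : (s ^ 2 + 2 * s) / 2 < Real.exp s - 1 := by
    have h4 := Real.sum_le_exp_of_nonneg hs.le 4
    simp [Finset.sum_range_succ, Nat.factorial] at h4
    nlinarith [pow_pos hs 3]
  have hL : (1 - Real.exp (-s)) ^ (-(1/2) : ℝ) * Real.exp (-((x + 1/2) * s))
      = (Real.exp s - 1) ^ (-(1/2) : ℝ) * Real.exp (-(x * s)) := by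
    have e1 : (1 - Real.exp (-s)) = (Real.exp s - 1) * Real.exp (-s) := by
      rw [sub_mul, ← Real.exp_add]; simp
    rw [e1, Real.mul_rpow hes.le (Real.exp_pos _).le,
      Real.rpow_def_of_pos (Real.exp_pos _), Real.log_exp, mul_assoc, ← Real.exp_add]
    congr 1
    ring
  have hR : Real.sqrt 2 * ((s ^ 2 + 2 * s) ^ (-(1/2) : ℝ) * Real.exp (-(x * s)))
      = ((s ^ 2 + 2 * s) / 2) ^ (-(1/2) : ℝ) * Real.exp (-(x * s)) := by
    rw [Real.div_rpow (by nlinarith) (by norm_num : (0:ℝ) ≤ 2),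
      Real.rpow_neg (by norm_num : (0:ℝ) ≤ 2), div_inv_eq_mul, Real.sqrt_eq_rpow]
    ring
  rw [hL, hR]
  exact mul_lt_mul_of_pos_right
    (Real.rpow_lt_rpow_of_neg (by nlinarith) hkey (by norm_num)) (Real.exp_pos _)

theorem stmt12 (x : ℝ) (hx : 0 < x) :
    1 / Real.sqrt (x + 1 / 2) < Real.Gamma (x + 1 / 2) / Real.Gamma (x + 1) ∧
      Real.Gamma (x + 1 / 2) / Real.Gamma (x + 1) <
        Real.sqrt (2 / Real.pi) * Real.exp x * besselK 0 x := by
  have hπ : (0:ℝ) < Real.sqrt Real.pi := Real.sqrt_pos.2 Real.pi_pos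
  have hΓ1 : (0:ℝ) < Real.Gamma (x + 1) := Real.Gamma_pos_of_pos (by linarith)
  have Ig3 := aux_int_g3 hx
  have Ig3' : IntegrableOn
      (fun s : ℝ => Real.sqrt 2 * ((s ^ 2 + 2 * s) ^ (-(1/2) : ℝ) * Real.exp (-(x * s))))
      (Ioi (0:ℝ)) := Ig3.const_mul _
  have Ig2 : IntegrableOn
      (fun s : ℝ => (1 - Real.exp (-s)) ^ (-(1/2) : ℝ) * Real.exp (-((x + 1/2) * s)))
      (Ioi (0:ℝ)) := by
    refine Integrable.mono' Ig3' (Measurable.aestronglyMeasurable (by fun_prop)) ?_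
    refine (ae_restrict_iff' measurableSet_Ioi).2 (.of_forall fun s hs => ?_)
    have h1 : 0 < 1 - Real.exp (-s) := by
      have := Real.exp_lt_one_iff.2 (neg_lt_zero.2 (mem_Ioi.1 hs)); linarith
    rw [Real.norm_eq_abs,
      abs_of_nonneg (mul_nonneg (Real.rpow_nonneg h1.le _) (Real.exp_pos _).le)]
    exact (aux_p2 hs).le
  have Ig1 : IntegrableOn
      (fun s : ℝ => s ^ (-(1/2) : ℝ) * Real.exp (-((x + 1/2) * s))) (Ioi (0:ℝ)) := by
    refine Integrable.mono' Ig2 (Measurable.aestronglyMeasurable (by fun_prop)) ?_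
    refine (ae_restrict_iff' measurableSet_Ioi).2 (.of_forall fun s hs => ?_)
    rw [Real.norm_eq_abs,
      abs_of_nonneg (mul_nonneg (Real.rpow_nonneg (le_of_lt hs) _) (Real.exp_pos _).le)]
    exact (aux_p1 hs).le
  have hI2 : (∫ s in Ioi (0:ℝ),
        (1 - Real.exp (-s)) ^ (-(1/2) : ℝ) * Real.exp (-((x + 1/2) * s)))
      = Real.sqrt Real.pi * (Real.Gamma (x + 1/2) / Real.Gamma (x + 1)) := by
    have h := aux_beta_interval hx
    rw [aux_subst x] at h
    have h2 : (∫ s in Ioi (0:ℝ),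
          (1 - Real.exp (-s)) ^ (-(1/2) : ℝ) * Real.exp (-((x + 1/2) * s)))
        = Real.Gamma (x + 1/2) * Real.sqrt Real.pi / Real.Gamma (x + 1) :=
      (eq_div_iff hΓ1.ne').2 (by linarith [h])
    rw [h2]; ring
  have hlt1 := aux_integral_lt Ig1 Ig2 (fun s hs => aux_p1 hs)
  rw [aux_g1 hx, hI2] at hlt1
  have hx2 : (0:ℝ) < Real.sqrt (x + 1/2) := Real.sqrt_pos.2 (by linarith)
  constructor
  · refine (mul_lt_mul_iff_right₀ hπ).1 ?_
    calc Real.sqrt Real.pi * (1 / Real.sqrt (x + 1/2))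
        = Real.sqrt Real.pi / Real.sqrt (x + 1/2) := by ring
      _ < _ := hlt1
  · have hlt2 := aux_integral_lt Ig2 Ig3' (fun s hs => aux_p2 hs)
    rw [hI2, integral_const_mul] at hlt2
    set J := ∫ t in Ioi (1:ℝ), Real.exp (-x * t) * (t ^ 2 - 1) ^ (-(1/2) : ℝ) with hJdef
    have hJ : (∫ s in Ioi (0:ℝ), (s ^ 2 + 2 * s) ^ (-(1/2) : ℝ) * Real.exp (-(x * s)))
        = Real.exp x * J := by
      rw [hJdef, aux_shift x, ← mul_assoc, ← Real.exp_add]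
      simp
    rw [hJ] at hlt2
    have hb : besselK 0 x = J := by
      rw [hJdef, besselK, show (0:ℝ) + 1/2 = 1/2 by norm_num, Real.Gamma_one_half_eq,
        Real.rpow_zero, show (0:ℝ) - 1/2 = -(1/2) by norm_num, mul_one,
        div_self (by positivity : Real.sqrt Real.pi ≠ 0), one_mul]
    rw [hb, Real.sqrt_div (by norm_num : (0:ℝ) ≤ 2) Real.pi]
    refine (mul_lt_mul_iff_right₀ hπ).1 ?_
    calc Real.sqrt Real.pi * (Real.Gamma (x + 1/2) / Real.Gamma (x + 1))
        < Real.sqrt 2 * (Real.exp x * J) := hlt2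
      _ = Real.sqrt Real.pi * (Real.sqrt 2 / Real.sqrt Real.pi * Real.exp x * J) := by
          field_simp
end
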